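/- Let E be a row-finite directed graph without sinks, and let v be a vertex. The following are equivalent: (1) there exists a finite disjoint decomposition Z(v) = ⊔_{i=1}^n Z(β_i) into cylinder sets of finite paths β_i from v such that for every i there is a finite path α_i with s(α_i) = v, t(α_i) = t(β_i), and α_i passes through a vertex lying on a cycle; (2) for every maximal tail M containing v, there is a cycle lying entirely in M to which v connects by a path in M. -/

import Mathlib

variable {V E : Type}

/-- A finite path in a directed graph with source map `s` and target map `t`.
Paths of length 0 are identified with their source vertex. -/
structure FPath (s t : E → V) : Type where
  src : V
  edges : List E
  chain : edges.Chain' (fun e f => t e = s f)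
  head_src : ∀ e ∈ edges.head?, s e = src

namespace FPath

variable {s t : E → V}

/-- The terminal vertex of a finite path. -/
def trg (p : FPath s t) : V := (p.edges.getLast?).elim p.src t

/-- The length-zero path at a vertex. -/
def ofVertex (s t : E → V) (v : V) : FPath s t :=
  ⟨v, [], List.IsChain.nil, by simp⟩

end FPath

/-- `x : ℕ → E` is an infinite path when consecutive edges match up. -/
def IsInfPath (s t : E → V) (x : ℕ → E) : Prop := ∀ i, t (x i) = s (x (i + 1))

/-- The infinite path space `E^∞`. -/
abbrev InfPath (s t : E → V) : Type := {x : ℕ → E // IsInfPath s t x}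

/-- The cylinder set `Z(p)` of a finite path `p`. -/
def Cyl (s t : E → V) (p : FPath s t) : Set (InfPath s t) :=
  {x | s (x.1 0) = p.src ∧ ∀ (i : ℕ) (h : i < p.edges.length), x.1 i = p.edges[i]'h}

/-- The cylinder set `Z(v)` of a vertex: all infinite paths starting at `v`. -/
def CylV (s t : E → V) (v : V) : Set (InfPath s t) := {x | s (x.1 0) = v}

/-- A graph is row-finite when each vertex emits finitely many edges. -/
def RowFinite (s : E → V) : Prop := ∀ v : V, {e : E | s e = v}.Finite

/-- A graph has no sinks when each vertex emits at least one edge. -/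
def NoSinks (s : E → V) : Prop := ∀ v : V, ∃ e : E, s e = v

/-- `Reach s t v w` : there is a finite path (possibly empty) from `v` to `w`. -/
def Reach (s t : E → V) (v w : V) : Prop := ∃ p : FPath s t, p.src = v ∧ p.trg = w

/-- A cycle (loop): a nonempty finite path returning to its source. -/
def IsCycle {s t : E → V} (p : FPath s t) : Prop := p.edges ≠ [] ∧ p.trg = p.src

/-- A cycle that visits its base only at the start and the end. -/
def IsStrictCycle {s t : E → V} (p : FPath s t) : Prop :=
  IsCycle p ∧ ∀ (i : ℕ) (h : i < p.edges.length), 0 < i → s (p.edges[i]'h) ≠ p.src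

/-- The vertices visited by a finite path. -/
def OnPath {s t : E → V} (p : FPath s t) (u : V) : Prop :=
  u = p.src ∨ ∃ e ∈ p.edges, t e = u

/-- `V^2` : vertices which are the base of at least two distinct cycles. -/
def V2set (s t : E → V) : Set V :=
  {v | ∃ p q : FPath s t, p.src = v ∧ q.src = v ∧ IsStrictCycle p ∧ IsStrictCycle q ∧
    p.edges ≠ q.edges}

/-- `V^1` : vertices which are the base of exactly one cycle. -/
def V1set (s t : E → V) : Set V :=
  {v | ∃! l : List E, ∃ p : FPath s t, p.src = v ∧ IsStrictCycle p ∧ p.edges = l}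

/-- Condition (K): no vertex is the base of exactly one cycle. -/
def CondK (s t : E → V) : Prop := V1set s t = ∅

/-- Vertices which lie on a loop (cycle). -/
def OnLoop (s t : E → V) : Set V :=
  {u | ∃ p : FPath s t, IsCycle p ∧ OnPath p u}

/-- The path `p` passes through a vertex of the set `S`. -/
def Passes {s t : E → V} (p : FPath s t) (S : Set V) : Prop := ∃ u ∈ S, OnPath p u

/-- `B` is a finite decomposition of `Z(v)` into disjoint cylinder sets of paths from `v`. -/
def Decomp (s t : E → V) (v : V) (B : List (FPath s t)) : Prop :=
  (∀ β ∈ B, β.src = v) ∧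
  (⋃ β ∈ B, Cyl s t β) = CylV s t v ∧
  (B.map (Cyl s t)).Pairwise Disjoint

/-- Condition (I). -/
def CondI (s t : E → V) : Prop :=
  ∀ v : V, ∃ α : FPath s t, α.src = v ∧ α.trg ∈ V2set s t

/-- Condition (DI). -/
def CondDI (s t : E → V) : Prop :=
  ∀ v : V, ∃ B : List (FPath s t), Decomp s t v B ∧
    ∀ β ∈ B, ∃ α : FPath s t, α.src = v ∧ α.trg = β.trg ∧ Passes α (V2set s t)

/-- Condition (DL). -/
def CondDL (s t : E → V) : Prop :=
  ∀ v : V, ∃ B : List (FPath s t), Decomp s t v B ∧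
    ∀ β ∈ B, ∃ α : FPath s t, α.src = v ∧ α.trg = β.trg ∧ Passes α (OnLoop s t)

/-- `Z(μ)` is `(G^a,2,1)`-paradoxical: two families of pairs of finite paths
`(α_i, β_i)` and `(γ_j, δ_j)` with `t(α)=t(β)`, the cylinders of the second
coordinates each covering `Z(μ)`, and the cylinders of the first coordinates
pairwise disjoint subsets of `Z(μ)`. -/
def Paradoxical (s t : E → V) (μ : FPath s t) : Prop :=
  ∃ A C : List (FPath s t × FPath s t),
    (∀ q ∈ A ++ C, q.1.trg = q.2.trg ∧ Cyl s t q.1 ⊆ Cyl s t μ) ∧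
    (⋃ q ∈ A, Cyl s t q.2) = Cyl s t μ ∧
    (⋃ q ∈ C, Cyl s t q.2) = Cyl s t μ ∧
    ((A ++ C).map (fun q => Cyl s t q.1)).Pairwise Disjoint

/-- Paradoxicality of the cylinder set `Z(v)` of a vertex. -/
def ParadoxicalV (s t : E → V) (v : V) : Prop := Paradoxical s t (FPath.ofVertex s t v)

/-- A maximal tail. -/
def MaximalTail (s t : E → V) (M : Set V) : Prop :=
  M.Nonempty ∧
  (∀ v w : V, Reach s t v w → w ∈ M → v ∈ M) ∧
  (∀ v ∈ M, (∃ e : E, s e = v) → ∃ e : E, s e = v ∧ t e ∈ M) ∧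
  (∀ v ∈ M, ∀ w ∈ M, ∃ y ∈ M, Reach s t v y ∧ Reach s t w y)

/-- The shift map on the infinite path space. -/
def shiftMap (s t : E → V) (x : InfPath s t) : InfPath s t :=
  ⟨fun i => x.1 (i + 1), fun i => x.2 (i + 1)⟩

/-- The cylinder set of a single edge. -/
def edgeCyl (s t : E → V) (e : E) : Set (InfPath s t) := {x | x.1 0 = e}

/-- Eventual periodicity of an infinite sequence of edges. -/
def EvPeriodic (x : ℕ → E) : Prop := ∃ N p : ℕ, 1 ≤ p ∧ ∀ i, N ≤ i → x (i + p) = x i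

/-- A cycle has an exit. -/
def HasExit {s t : E → V} (c : FPath s t) : Prop :=
  ∃ (i : ℕ) (h : i < c.edges.length) (e : E),
    e ≠ c.edges[i]'h ∧ s e = s (c.edges[i]'h)

/-- The length-one path consisting of a single edge. -/
def path1 (s t : E → V) (w : V) (a : E) (h : s a = w) : FPath s t :=
  ⟨w, [a], List.IsChain.singleton _, by simp [h]⟩

/-- The length-two path consisting of two composable edges. -/
def path2 (s t : E → V) (w : V) (a b : E) (ha : s a = w) (hab : t a = s b) : FPath s t :=
  ⟨w, [a, b], List.isChain_pair.mpr hab, by simp [ha]⟩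

section Aux

variable {s t : E → V}

theorem FPath.ext' {p q : FPath s t} (h1 : p.src = q.src) (h2 : p.edges = q.edges) : p = q := by
  cases p; cases q; simp_all

theorem FPath.trg_nil {p : FPath s t} (h : p.edges = []) : p.trg = p.src := by
  simp [FPath.trg, h]

theorem FPath.trg_of_getLast {p : FPath s t} {e : E} (h : p.edges.getLast? = some e) :
    p.trg = t e := by simp [FPath.trg, h]

theorem FPath.getLast_mem_trg {p : FPath s t} : ∀ e ∈ p.edges.getLast?, t e = p.trg := by
  intro e he; rw [FPath.trg_of_getLast he]

@[simp] theorem FPath.trg_ofVertex (w : V) : (FPath.ofVertex s t w).trg = w := rfl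

theorem reach_refl (w : V) : Reach s t w w := ⟨FPath.ofVertex s t w, rfl, rfl⟩

/-- Concatenation of two composable finite paths. -/
def FPath.append (p q : FPath s t) (h : q.src = p.trg) : FPath s t where
  src := p.src
  edges := p.edges ++ q.edges
  chain := p.chain.append q.chain (by
    intro a ha b hb
    rw [FPath.getLast_mem_trg a ha, ← h]; exact (q.head_src b hb).symm)
  head_src := by
    intro e he
    rw [List.head?_append] at he
    rcases hp : p.edges.head? with _ | a
    · have hpn : p.edges = [] := List.head?_eq_none_iff.mp hp
      rw [hp] at he; simp at he
      rw [q.head_src e he, h, FPath.trg_nil hpn]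
    · rw [hp] at he; simp at he; subst he; exact p.head_src _ hp

theorem FPath.trg_append (p q : FPath s t) (h : q.src = p.trg) :
    (p.append q h).trg = q.trg := by
  show ((p.edges ++ q.edges).getLast?).elim p.src t = q.trg
  rw [List.getLast?_append]
  rcases hq : q.edges.getLast? with _ | a
  · have hqe : q.edges = [] := List.getLast?_eq_none_iff.mp hq
    simp only [Option.or]
    rw [FPath.trg_nil hqe, h]; rfl
  · simp only [Option.or, Option.elim]
    exact (FPath.trg_of_getLast hq).symm

theorem onPath_src (p : FPath s t) : OnPath p p.src := Or.inl rfl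

theorem onPath_trg (p : FPath s t) : OnPath p p.trg := by
  rcases hq : p.edges.getLast? with _ | a
  · have hqe : p.edges = [] := List.getLast?_eq_none_iff.mp hq
    exact Or.inl (FPath.trg_nil hqe)
  · exact Or.inr ⟨a, List.mem_of_getLast? hq, (FPath.trg_of_getLast hq).symm⟩

theorem onPath_append_elim {p q : FPath s t} {h : q.src = p.trg} {u : V}
    (hu : OnPath (p.append q h) u) : OnPath p u ∨ OnPath q u := by
  rcases hu with hu | ⟨e, he, hte⟩
  · exact Or.inl (Or.inl hu)
  · rcases List.mem_append.mp he with he | he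
    · exact Or.inl (Or.inr ⟨e, he, hte⟩)
    · exact Or.inr (Or.inr ⟨e, he, hte⟩)

theorem onPath_append_left {p q : FPath s t} {h : q.src = p.trg} {u : V}
    (hu : OnPath p u) : OnPath (p.append q h) u := by
  rcases hu with hu | ⟨e, he, hte⟩
  · exact Or.inl hu
  · exact Or.inr ⟨e, List.mem_append.mpr (Or.inl he), hte⟩

theorem reach_trans {u w y : V} (h1 : Reach s t u w) (h2 : Reach s t w y) : Reach s t u y := by
  obtain ⟨p, hp1, hp2⟩ := h1
  obtain ⟨q, hq1, hq2⟩ := h2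
  exact ⟨p.append q (by rw [hq1, hp2]), hp1, by rw [FPath.trg_append, hq2]⟩

/-- Prepending an edge to a path. -/
def FPath.cons (e : E) (p : FPath s t) (h : t e = p.src) : FPath s t where
  src := s e
  edges := e :: p.edges
  chain := List.isChain_cons.mpr ⟨fun f hf => h.trans (p.head_src f hf).symm, p.chain⟩
  head_src := by intro f hf; simp at hf; subst hf; rfl

theorem FPath.trg_cons (e : E) (p : FPath s t) (h : t e = p.src) :
    (FPath.cons e p h).trg = p.trg := by
  show ((e :: p.edges).getLast?).elim (s e) t = p.trg
  rcases hq : p.edges.getLast? with _ | a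
  · have hqe : p.edges = [] := List.getLast?_eq_none_iff.mp hq
    simp [hqe, FPath.trg_nil hqe, h]
  · have h2 : (e :: p.edges).getLast? = some a := by
      rw [List.getLast?_cons, hq]; rfl
    simp only [h2, Option.elim]
    exact (FPath.trg_of_getLast hq).symm

/-- Removing the first edge of a path. -/
theorem FPath.exists_tail {p : FPath s t} {e : E} {l : List E} (h : p.edges = e :: l) :
    ∃ q : FPath s t, q.src = t e ∧ q.edges = l ∧ q.trg = p.trg := by
  have hch := p.chain
  rw [h] at hch
  have hch' := List.isChain_cons.mp hch
  refine ⟨⟨t e, l, hch'.2, fun f hf => (hch'.1 f hf).symm⟩, rfl, rfl, ?_⟩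
  show (l.getLast?).elim (t e) t = (p.edges.getLast?).elim p.src t
  rw [h]
  cases hl2 : l.getLast? with
  | none =>
    rw [List.getLast?_eq_none_iff.mp hl2]
    rfl
  | some a =>
    rw [List.getLast?_cons, hl2]
    rfl

/-- The prefix of a path consisting of its first `n` edges. -/
def FPath.take (p : FPath s t) (n : ℕ) : FPath s t where
  src := p.src
  edges := p.edges.take n
  chain := p.chain.prefix (List.take_prefix n _)
  head_src := by
    intro e he
    apply p.head_src
    cases n with
    | zero => simp at he
    | succ n =>
      cases hl : p.edges with
      | nil => rw [hl] at he; simp at he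
      | cons a l => rw [hl] at he; simpa using he

theorem FPath.trg_take {p : FPath s t} {i : ℕ} (h : i < p.edges.length) :
    (p.take (i + 1)).trg = t (p.edges[i]'h) := by
  apply FPath.trg_of_getLast
  rw [List.getLast?_eq_getElem?]
  have hlen : (p.edges.take (i + 1)).length = i + 1 := by
    simp [Nat.succ_le_of_lt h]
  show (p.edges.take (i+1))[(p.edges.take (i + 1)).length - 1]? = _
  rw [hlen]
  simp [List.getElem?_take, h]

theorem onPath_take {p : FPath s t} {n : ℕ} {u : V} (hu : OnPath (p.take n) u) :
    OnPath p u := by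
  rcases hu with hu | ⟨e, he, hte⟩
  · exact Or.inl hu
  · exact Or.inr ⟨e, List.take_subset n _ he, hte⟩

theorem exists_prefix {p : FPath s t} {u : V} (h : OnPath p u) :
    ∃ q : FPath s t, q.src = p.src ∧ q.trg = u ∧ ∀ w, OnPath q w → OnPath p w := by
  rcases h with h | ⟨e, he, hte⟩
  · refine ⟨FPath.ofVertex s t p.src, rfl, by rw [FPath.trg_ofVertex, h], ?_⟩
    intro w hw
    rcases hw with hw | ⟨e, he, _⟩
    · exact Or.inl hw
    · exact absurd he (by simp [FPath.ofVertex])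
  · obtain ⟨i, hi, hie⟩ := List.mem_iff_getElem.mp he
    refine ⟨p.take (i + 1), rfl, ?_, fun w hw => onPath_take hw⟩
    rw [FPath.trg_take hi, hie, hte]

theorem exists_suffix {p : FPath s t} {u : V} (h : OnPath p u) :
    ∃ q : FPath s t, q.src = u ∧ q.trg = p.trg ∧ ∀ w, OnPath q w → OnPath p w := by
  suffices H : ∀ (n : ℕ) (p : FPath s t) (u : V), p.edges.length = n → OnPath p u →
      ∃ q : FPath s t, q.src = u ∧ q.trg = p.trg ∧ ∀ w, OnPath q w → OnPath p w by
    exact H p.edges.length p u rfl h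
  intro n
  induction n with
  | zero =>
    intro p u hn h
    rcases h with h | ⟨e, he, _⟩
    · exact ⟨p, h.symm, rfl, fun w hw => hw⟩
    · rw [List.length_eq_zero_iff.mp hn] at he; simp at he
  | succ n ih =>
    intro p u hn h
    cases hl : p.edges with
    | nil => rw [hl] at hn; simp at hn
    | cons e l =>
      obtain ⟨q, hq1, hq2, hq3⟩ := FPath.exists_tail hl
      have hln : q.edges.length = n := by
        rw [hq2]; rw [hl] at hn; simpa using hn
      have hsub : ∀ w, OnPath q w → OnPath p w := by
        intro w hw
        rcases hw with hw | ⟨f, hf, htf⟩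
        · exact Or.inr ⟨e, by rw [hl]; exact List.mem_cons_self, by rw [hw, hq1]⟩
        · exact Or.inr ⟨f, by rw [hl]; exact List.mem_cons_of_mem e (hq2 ▸ hf), htf⟩
      rcases h with h | ⟨f, hf, htf⟩
      · exact ⟨p, h.symm, rfl, fun w hw => hw⟩
      · rw [hl] at hf
        have hqu : OnPath q u := by
          rcases List.mem_cons.mp hf with hf | hf
          · subst hf; exact Or.inl (by rw [hq1, htf])
          · exact Or.inr ⟨f, by rw [hq2]; exact hf, htf⟩
        obtain ⟨r, hr1, hr2, hr3⟩ := ih q u hln hqu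
        exact ⟨r, hr1, by rw [hr2, hq3], fun w hw => hsub w (hr3 w hw)⟩

theorem reach_of_onPath_trg {p : FPath s t} {u : V} (h : OnPath p u) :
    Reach s t u p.trg := by
  obtain ⟨q, h1, h2, _⟩ := exists_suffix h
  exact ⟨q, h1, h2⟩

theorem reach_of_src_onPath {p : FPath s t} {u : V} (h : OnPath p u) :
    Reach s t p.src u := by
  obtain ⟨q, h1, h2, _⟩ := exists_prefix h
  exact ⟨q, h1, h2⟩

/-- `w` is reachable from `v` by a path passing through a loop vertex. -/
def GoodV (s t : E → V) (v w : V) : Prop :=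
  ∃ α : FPath s t, α.src = v ∧ α.trg = w ∧ Passes α (OnLoop s t)

theorem GoodV.mono {v w w' : V} (hg : GoodV s t v w) (hr : Reach s t w w') :
    GoodV s t v w' := by
  obtain ⟨α, h1, h2, u₀, hu₀, hOn⟩ := hg
  obtain ⟨r, hr1, hr2⟩ := hr
  exact ⟨α.append r (by rw [hr1, h2]), h1, by rw [FPath.trg_append, hr2],
    u₀, hu₀, onPath_append_left hOn⟩

theorem exists_infPath_in {S : Set V} (hS : ∀ w ∈ S, ∃ e : E, s e = w ∧ t e ∈ S)
    {v : V} (hv : v ∈ S) :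
    ∃ x : InfPath s t, s (x.1 0) = v ∧ ∀ i, s (x.1 i) ∈ S ∧ t (x.1 i) ∈ S := by
  choose f hf1 hf2 using hS
  let u : ℕ → {w : V // w ∈ S} :=
    fun n => Nat.rec ⟨v, hv⟩ (fun _ w => ⟨t (f w.1 w.2), hf2 w.1 w.2⟩) n
  refine ⟨⟨fun n => f (u n).1 (u n).2, ?_⟩, ?_, ?_⟩
  · intro i
    show t (f (u i).1 (u i).2) = s (f (u (i+1)).1 (u (i+1)).2)
    rw [hf1 (u (i+1)).1 (u (i+1)).2]
  · exact hf1 v hv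
  · intro i
    refine ⟨?_, hf2 _ _⟩
    rw [hf1]
    exact (u i).2

theorem reach_along (x : InfPath s t) (i d : ℕ) :
    Reach s t (s (x.1 i)) (s (x.1 (i + d))) := by
  induction d with
  | zero => exact reach_refl _
  | succ d ihd =>
    refine reach_trans ihd ⟨path1 s t (s (x.1 (i+d))) (x.1 (i+d)) rfl, rfl, ?_⟩
    show (([x.1 (i+d)] : List E).getLast?).elim _ t = s (x.1 (i+d+1))
    simp only [List.getLast?_singleton, Option.elim]
    exact x.2 (i+d)

/-- The truncation of an infinite path to its first `n` edges. -/
def trunc (x : InfPath s t) (n : ℕ) : FPath s t where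
  src := s (x.1 0)
  edges := (List.range n).map x.1
  chain := by
    refine (List.isChain_map _).mpr ?_
    cases n with
    | zero => simp
    | succ n => exact (List.isChain_range_succ _ n).mpr (fun m _ => x.2 m)
  head_src := by
    intro e he
    cases n with
    | zero => simp at he
    | succ n =>
      rw [List.range_succ_eq_map] at he
      simp at he
      rw [he]

theorem finite_paths (hrf : RowFinite s) (n : ℕ) :
    ∀ v : V, {p : FPath s t | p.src = v ∧ p.edges.length = n}.Finite := by
  classical
  induction n with
  | zero =>
    intro v
    apply Set.Finite.subset (Set.finite_singleton (FPath.ofVertex s t v))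
    rintro p ⟨h1, h2⟩
    exact Set.mem_singleton_iff.mpr (FPath.ext' h1 (List.length_eq_zero_iff.mp h2))
  | succ n ih =>
    intro v
    have hsub : {p : FPath s t | p.src = v ∧ p.edges.length = n + 1} ⊆
        ⋃ e ∈ {e : E | s e = v},
          (fun q : FPath s t => if h : t e = q.src then FPath.cons e q h else q) ''
            {q : FPath s t | q.src = t e ∧ q.edges.length = n} := by
      rintro p ⟨h1, h2⟩
      cases hl : p.edges with
      | nil => rw [hl] at h2; simp at h2
      | cons e l =>
        obtain ⟨q, hq1, hq2, _⟩ := FPath.exists_tail hl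
        have hse : s e = v := by rw [← h1]; exact p.head_src e (by rw [hl]; rfl)
        refine Set.mem_biUnion hse ⟨q, ⟨hq1, by rw [hq2]; rw [hl] at h2; simpa using h2⟩, ?_⟩
        show (if h : t e = q.src then FPath.cons e q h else q) = p
        rw [dif_pos hq1.symm]
        refine FPath.ext' ?_ ?_
        · show s e = p.src
          rw [hse, h1]
        · show e :: q.edges = p.edges
          rw [hq2, hl]
    exact Set.Finite.subset (Set.Finite.biUnion (hrf v) (fun e _ => (ih (t e)).image _)) hsub

end Aux

/-- for a vertex `v` of a row-finite graph without sinks, the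
following are equivalent: (1) `Z(v)` has a finite disjoint decomposition into
cylinder sets `Z(β_i)` with paths `α_i` from `v` to `t(β_i)` passing through a
vertex on a cycle; (2) in every maximal tail `M` containing `v` there is a cycle
lying in `M` to which `v` connects by a path in `M`. -/
theorem stmt9 (s t : E → V) (hrf : RowFinite s) (hns : NoSinks s) (v : V) :
    (∃ B : List (FPath s t), Decomp s t v B ∧
      ∀ β ∈ B, ∃ α : FPath s t, α.src = v ∧ α.trg = β.trg ∧ Passes α (OnLoop s t))
    ↔
    (∀ M : Set V, MaximalTail s t M → v ∈ M →
      ∃ c : FPath s t, IsCycle c ∧ (∀ u : V, OnPath c u → u ∈ M) ∧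
        ∃ α : FPath s t, α.src = v ∧ α.trg = c.src ∧ ∀ u : V, OnPath α u → u ∈ M) := by
  constructor
  · -- (1) → (2)
    rintro ⟨B, ⟨hBsrc, hBcover, _⟩, hBgood⟩ M hM hvM
    obtain ⟨hMne, hMdown, hMemit, hMcof⟩ := hM
    have hS : ∀ w ∈ M, ∃ e : E, s e = w ∧ t e ∈ M := by
      intro w hw
      exact hMemit w hw (hns w)
    obtain ⟨x, hx0, hxS⟩ := exists_infPath_in hS hvM
    have hxCyl : x ∈ CylV s t v := hx0
    rw [← hBcover] at hxCyl
    rw [Set.mem_iUnion₂] at hxCyl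
    obtain ⟨β, hβB, hxβ⟩ := hxCyl
    have hβsrc := hBsrc β hβB
    have htβ : β.trg ∈ M := by
      rcases hg : β.edges.getLast? with _ | a
      · rw [FPath.trg_nil (List.getLast?_eq_none_iff.mp hg), hβsrc]
        exact hvM
      · rw [FPath.trg_of_getLast hg]
        obtain ⟨i, hi, hie⟩ := List.mem_iff_getElem.mp (List.mem_of_getLast? hg)
        have hxi : x.1 i = a := by rw [hxβ.2 i hi, hie]
        rw [← hxi]
        exact (hxS i).2
    obtain ⟨α, hα1, hα2, u₀, hu₀, hαu₀⟩ := hBgood β hβB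
    have hαM : ∀ w, OnPath α w → w ∈ M := by
      intro w hw
      have hr := reach_of_onPath_trg hw
      rw [hα2] at hr
      exact hMdown w β.trg hr htβ
    obtain ⟨c, hc, hcu₀⟩ := hu₀
    have hu₀M : u₀ ∈ M := hαM u₀ hαu₀
    have hcM : ∀ w, OnPath c w → w ∈ M := by
      intro w hw
      have h1 : Reach s t w c.trg := reach_of_onPath_trg hw
      have h2 : Reach s t c.trg u₀ := by
        rw [hc.2]; exact reach_of_src_onPath hcu₀
      exact hMdown w u₀ (reach_trans h1 h2) hu₀M
    obtain ⟨q1, hq11, hq12, hq13⟩ := exists_prefix hαu₀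
    obtain ⟨q2, hq21, hq22, hq23⟩ := exists_suffix hcu₀
    refine ⟨c, hc, hcM, q1.append q2 (by rw [hq21, hq12]), ?_, ?_, ?_⟩
    · show q1.src = v
      rw [hq11, hα1]
    · rw [FPath.trg_append, hq22, hc.2]
    · intro u hu
      rcases onPath_append_elim hu with hu | hu
      · exact hαM u (hq13 u hu)
      · exact hcM u (hq23 u hu)
  · -- (2) → (1)
    intro hMT
    have stepB : ∀ x : InfPath s t, s (x.1 0) = v → ∃ i, GoodV s t v (s (x.1 i)) := by
      intro x hx0
      set M : Set V := {u | ∃ i, Reach s t u (s (x.1 i))} with hMdef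
      have hvM : v ∈ M := ⟨0, by rw [hx0]; exact reach_refl v⟩
      have hMT' : MaximalTail s t M := by
        refine ⟨⟨v, hvM⟩, ?_, ?_, ?_⟩
        · rintro a b hab ⟨i, hbi⟩
          exact ⟨i, reach_trans hab hbi⟩
        · rintro u ⟨i, hui⟩ _
          obtain ⟨p, hp1, hp2⟩ := hui
          cases hl : p.edges with
          | nil =>
            have hu : u = s (x.1 i) := by rw [← hp1, ← FPath.trg_nil hl, hp2]
            refine ⟨x.1 i, hu.symm, i + 1, ?_⟩
            rw [x.2 i]
            exact reach_refl _
          | cons e l =>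
            obtain ⟨q, hq1, hq2, hq3⟩ := FPath.exists_tail hl
            refine ⟨e, by rw [← hp1]; exact p.head_src e (by rw [hl]; rfl), i, ?_⟩
            exact ⟨q, hq1, hq3.trans hp2⟩
        · rintro a ⟨i, hai⟩ b ⟨j, hbj⟩
          refine ⟨s (x.1 (max i j)), ⟨max i j, reach_refl _⟩, ?_, ?_⟩
          · refine reach_trans hai ?_
            have h := reach_along x i (max i j - i)
            rwa [Nat.add_sub_cancel' (le_max_left i j)] at h
          · refine reach_trans hbj ?_
            have h := reach_along x j (max i j - j)
            rwa [Nat.add_sub_cancel' (le_max_right i j)] at h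
      obtain ⟨c, hc, hcM, α, hα1, hα2, hαM⟩ := hMT M hMT' hvM
      have hcsrcM : c.src ∈ M := hαM c.src (hα2 ▸ onPath_trg α)
      obtain ⟨i, hreach⟩ := hcsrcM
      refine ⟨i, ?_⟩
      have hgoodc : GoodV s t v c.src :=
        ⟨α, hα1, hα2, c.src, ⟨c, hc, onPath_src c⟩, hα2 ▸ onPath_trg α⟩
      exact hgoodc.mono hreach
    have hex : ∃ n : ℕ, ∀ p : FPath s t, p.src = v → p.edges.length = n →
        GoodV s t v p.trg := by
      by_contra hno
      push_neg at hno
      set S : Set V := {w | ∀ n : ℕ, ∃ p : FPath s t,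
        p.src = w ∧ n ≤ p.edges.length ∧ ¬ GoodV s t v p.trg} with hSdef
      have hvS : v ∈ S := by
        intro n
        obtain ⟨p, h1, h2, h3⟩ := hno n
        exact ⟨p, h1, h2.ge, h3⟩
      have hstep : ∀ w ∈ S, ∃ e : E, s e = w ∧ t e ∈ S := by
        intro w hw
        by_contra hne
        push_neg at hne
        have hbd : ∀ e : E, s e = w → ∃ N : ℕ, ∀ p : FPath s t, p.src = t e →
            N ≤ p.edges.length → GoodV s t v p.trg := by
          intro e he
          have h := hne e he
          simp only [hSdef, Set.mem_setOf_eq] at h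
          push_neg at h
          obtain ⟨N, hN⟩ := h
          exact ⟨N, fun p h1 h2 => hN p h1 h2⟩
        classical
        choose! Nf hNf using hbd
        obtain ⟨p, hp1, hp2, hp3⟩ := hw ((hrf w).toFinset.sup Nf + 1)
        cases hl : p.edges with
        | nil => rw [hl] at hp2; simp at hp2
        | cons e l =>
          obtain ⟨q, hq1, hq2, hq3⟩ := FPath.exists_tail hl
          have hse : s e = w := by rw [← hp1]; exact p.head_src e (by rw [hl]; rfl)
          have heF : e ∈ (hrf w).toFinset := (Set.Finite.mem_toFinset _).mpr hse
          have hNe : Nf e ≤ (hrf w).toFinset.sup Nf := Finset.le_sup heF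
          have hlen : Nf e ≤ q.edges.length := by
            rw [hq2]
            rw [hl, List.length_cons] at hp2
            omega
          exact hp3 (hq3 ▸ hNf e hse q hq1 hlen)
      obtain ⟨x, hx0, hxS⟩ := exists_infPath_in hstep hvS
      obtain ⟨i, hgi⟩ := stepB x hx0
      obtain ⟨p, h1, _, h3⟩ := (hxS i).1 0
      exact h3 (hgi.mono ⟨p, h1, rfl⟩)
    obtain ⟨n, hn⟩ := hex
    have hfin := finite_paths (t := t) hrf n v
    refine ⟨hfin.toFinset.toList, ⟨?_, ?_, ?_⟩, ?_⟩
    · intro β hβ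
      rw [Finset.mem_toList, Set.Finite.mem_toFinset] at hβ
      exact hβ.1
    · apply Set.eq_of_subset_of_subset
      · intro x hx
        rw [Set.mem_iUnion₂] at hx
        obtain ⟨β, hβB, hxβ⟩ := hx
        rw [Finset.mem_toList, Set.Finite.mem_toFinset] at hβB
        show s (x.1 0) = v
        rw [hxβ.1, hβB.1]
      · intro x hx
        rw [Set.mem_iUnion₂]
        refine ⟨trunc x n, ?_, ?_, ?_⟩
        · rw [Finset.mem_toList, Set.Finite.mem_toFinset]
          exact ⟨hx, by simp [trunc]⟩
        · rfl
        · intro i hi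
          simp [trunc]
    · have hnd : hfin.toFinset.toList.Pairwise (· ≠ ·) := hfin.toFinset.nodup_toList
      rw [List.pairwise_map]
      refine List.Pairwise.imp_of_mem ?_ hnd
      intro p q hp hq hpq
      rw [Finset.mem_toList, Set.Finite.mem_toFinset] at hp hq
      rw [Set.disjoint_left]
      intro x hxp hxq
      apply hpq
      have hlen : p.edges.length = q.edges.length := by rw [hp.2, hq.2]
      refine FPath.ext' (by rw [hp.1, hq.1]) ?_
      refine List.ext_getElem hlen ?_
      intro i h1 h2
      rw [← hxp.2 i h1, ← hxq.2 i h2]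
    · intro β hβ
      rw [Finset.mem_toList, Set.Finite.mem_toFinset] at hβ
      exact hn β hβ.1 hβ.2
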